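/- arXiv:0812.3278 — 2 statements merged into one kernel-verified Lean document; each statement's English description precedes it below -/
import Mathlib

section
/- Let a, b be nonnegative integers. Then there exist a natural number N and rational numbers μ₀, μ₁, …, μ_N such that for every P ∈ S^aD^b, the projection π_{a,b}(P) equals Σ_{j=0}^N μⱼ · δ^j(Δ^j(P)); here π_{a,b} : S^aD^b → S^aD^b is the linear projection with image V(a,b) = ker Δ ∩ S^aD^b and kernel δ(S^{a-1}D^{b-1}). -/
/-!
Write `T = δΔ`. On `S^cD^d`, Euler's identity gives `Δδ = δΔ + (c + d + 3)`, and hence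
`T (δ^j Δ^j P) = δ^{j+1} Δ^{j+1} P + λ_j δ^j Δ^j P` with `λ_j = j (c + d + 2 - j)`, so that
`δ^j Δ^j P = N_j(T) P` for the Newton polynomial `N_j = ∏_{i<j} (X - λ_i)`.
The polynomial `p = ∏_{1 ≤ j ≤ min(a,b)} (X - λ_j)` acts on `V(a,b) ⊆ ker T` as the nonzero
scalar `p(0)`; it kills `δ(S^{a-1}D^{b-1})`, because `Tδ = δ(T + a + b + 1)` there turns `p` into
`N_{min(a,b)}`, which annihilates `S^{a-1}D^{b-1}`. Thus `π_{a,b} = p(T) / p(0)`, and expanding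
this polynomial in the Newton basis `N_0, …, N_{min(a,b)}` gives the rational coefficients `μ_j`.
-/

open MvPolynomial

noncomputable section

/-- The polynomial ring `R = ℂ[e₁,e₂,e₃,x₁,x₂,x₃]`:
variables `0,1,2` are `e₁,e₂,e₃` and variables `3,4,5` are `x₁,x₂,x₃`. -/
abbrev R6 : Type := MvPolynomial (Fin 6) ℂ

/-- the variable `eᵢ` -/
def ev (i : Fin 3) : Fin 6 := ⟨i.val, by omega⟩

/-- the variable `xᵢ` -/
def xv (i : Fin 3) : Fin 6 := ⟨i.val + 3, by omega⟩

/-- `Δ = Σᵢ (∂/∂eᵢ)∘(∂/∂xᵢ)` -/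
def Δ : Module.End ℂ R6 :=
  ∑ i : Fin 3, (pderiv (ev i)).toLinearMap ∘ₗ (pderiv (xv i)).toLinearMap

/-- `δ` = multiplication by `e₁x₁+e₂x₂+e₃x₃` -/
def δ : Module.End ℂ R6 :=
  LinearMap.mulLeft ℂ (∑ i : Fin 3, X (ev i) * X (xv i))

/-- weight recording the total degree in the `e`-variables -/
def wE : Fin 6 → ℕ := fun i => if i.val < 3 then 1 else 0

/-- weight recording the total degree in the `x`-variables -/
def wX : Fin 6 → ℕ := fun i => if i.val < 3 then 0 else 1

/-- `S^aD^b`: polynomials homogeneous of degree `a` in `e₁,e₂,e₃` and of degree `b` in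
`x₁,x₂,x₃`. -/
def SD (a b : ℕ) : Submodule ℂ R6 :=
  weightedHomogeneousSubmodule ℂ wE a ⊓ weightedHomogeneousSubmodule ℂ wX b

/-- `S^{e-1}D^{f-1}`, interpreted as `0` when `e = 0` or `f = 0`. -/
def SDsub (e f : ℕ) : Submodule ℂ R6 :=
  if e = 0 ∨ f = 0 then ⊥ else SD (e - 1) (f - 1)

/-- `V(a,b) = ker Δ ∩ S^aD^b` -/
def V (a b : ℕ) : Submodule ℂ R6 := LinearMap.ker Δ ⊓ SD a b

open scoped Polynomial

theorem MvPolynomial.IsWeightedHomogeneous.pderiv_eq_zero_of_lt {σ R : Type*} [CommSemiring R]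
    {w : σ → ℕ} {φ : MvPolynomial σ R} {n : ℕ} {i : σ} (h : φ.IsWeightedHomogeneous w n)
    (hn : n < w i) : pderiv i φ = 0 := by
  ext m
  rw [coeff_pderiv, coeff_zero]
  suffices coeff (m + Finsupp.single i 1) φ = 0 by rw [this, zero_mul]
  by_contra hm
  have := h hm
  rw [map_add, Finsupp.weight_single, one_smul] at this
  omega

theorem Polynomial.exists_eq_sum_smul_nodal_range {R : Type*} [CommRing R] [Nontrivial R]
    (v : ℕ → R) {n : ℕ} {q : R[X]} (hq : q.natDegree ≤ n) :
    ∃ μ : ℕ → R, q = ∑ j ∈ Finset.range (n + 1), μ j • Lagrange.nodal (Finset.range j) v := by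
  induction n generalizing v q with
  | zero =>
    refine ⟨fun _ ↦ q.coeff 0, ?_⟩
    simpa [Lagrange.nodal, smul_eq_C_mul] using eq_C_of_natDegree_le_zero hq
  | succ n ih =>
    obtain ⟨μ, hμ⟩ := ih (v ∘ Nat.succ) (q := q /ₘ (X - C (v 0)))
      (by rw [natDegree_divByMonic _ (monic_X_sub_C (v 0)), natDegree_X_sub_C]; omega)
    refine ⟨fun | 0 => q.eval (v 0) | j + 1 => μ j, ?_⟩
    conv_lhs => rw [← modByMonic_add_div q (X - C (v 0)), modByMonic_X_sub_C_eq_C_eval, hμ]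
    rw [Finset.sum_range_succ' _ (n + 1), Finset.mul_sum, add_comm]
    congr 1
    · refine Finset.sum_congr rfl fun j _ ↦ ?_
      simp only [Lagrange.nodal, Finset.prod_range_succ', Function.comp_apply, mul_smul_comm]
      rw [mul_comm]
    · simp [Lagrange.nodal, smul_eq_C_mul]

lemma wE_ev (i : Fin 3) : wE (ev i) = 1 := by simp [wE, ev]

lemma wE_xv (i : Fin 3) : wE (xv i) = 0 := by simp [wE, xv]

lemma wX_ev (i : Fin 3) : wX (ev i) = 0 := by simp [wX, ev]

lemma wX_xv (i : Fin 3) : wX (xv i) = 1 := by simp [wX, xv]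

lemma sum_fin_six_eq_sum_ev_add_sum_xv {M : Type*} [AddCommMonoid M] (f : Fin 6 → M) :
    ∑ j, f j = ∑ i : Fin 3, f (ev i) + ∑ i : Fin 3, f (xv i) := by
  simp only [Fin.sum_univ_six, Fin.sum_univ_three, add_assoc]
  rfl

lemma sum_X_ev_mul_pderiv {c : ℕ} {P : R6} (hP : P.IsWeightedHomogeneous wE c) :
    ∑ i : Fin 3, X (ev i) * pderiv (ev i) P = c • P := by
  simpa [sum_fin_six_eq_sum_ev_add_sum_xv, wE_ev, wE_xv] using hP.sum_weight_X_mul_pderiv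

lemma sum_X_xv_mul_pderiv {d : ℕ} {P : R6} (hP : P.IsWeightedHomogeneous wX d) :
    ∑ i : Fin 3, X (xv i) * pderiv (xv i) P = d • P := by
  simpa [sum_fin_six_eq_sum_ev_add_sum_xv, wX_ev, wX_xv] using hP.sum_weight_X_mul_pderiv

def eDotX : R6 := ∑ i : Fin 3, X (ev i) * X (xv i)

lemma δ_apply (Q : R6) : δ Q = eDotX * Q := rfl

lemma Δ_apply (P : R6) : Δ P = ∑ i : Fin 3, pderiv (ev i) (pderiv (xv i) P) := by
  simp [Δ]

lemma pderiv_ev_eDotX (i : Fin 3) : pderiv (ev i) eDotX = X (xv i) := by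
  fin_cases i <;> simp [eDotX, Fin.sum_univ_three, pderiv_X, ev, xv]

lemma pderiv_xv_eDotX (i : Fin 3) : pderiv (xv i) eDotX = X (ev i) := by
  fin_cases i <;> simp [eDotX, Fin.sum_univ_three, pderiv_X, ev, xv]

lemma eDotX_mem_SD : eDotX ∈ SD 1 1 := by
  refine Submodule.sum_mem _ fun i _ ↦ ⟨?_, ?_⟩
  · simpa [wE_ev, wE_xv] using
      (isWeightedHomogeneous_X ℂ wE (ev i)).mul (isWeightedHomogeneous_X ℂ wE (xv i))
  · simpa [wX_ev, wX_xv] using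
      (isWeightedHomogeneous_X ℂ wX (ev i)).mul (isWeightedHomogeneous_X ℂ wX (xv i))

section Bigraded

variable {c d : ℕ}

lemma Δ_δ_apply {Q : R6} (hQ : Q ∈ SD c d) : Δ (δ Q) = δ (Δ Q) + (c + d + 3) • Q := by
  have hi (i : Fin 3) : pderiv (ev i) (pderiv (xv i) (eDotX * Q)) = Q + X (ev i) * pderiv (ev i) Q +
      X (xv i) * pderiv (xv i) Q + eDotX * pderiv (ev i) (pderiv (xv i) Q) := by
    rw [pderiv_mul, pderiv_xv_eDotX, map_add, pderiv_mul, pderiv_mul, pderiv_X_self,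
      pderiv_ev_eDotX, one_mul]
    ring
  simp only [Δ_apply, δ_apply, hi, Finset.sum_add_distrib, Finset.sum_const, Finset.card_univ,
    Fintype.card_fin]
  rw [sum_X_ev_mul_pderiv hQ.1, sum_X_xv_mul_pderiv hQ.2, ← Finset.mul_sum, add_smul, add_smul]
  abel

lemma δ_mem_SD {Q : R6} (hQ : Q ∈ SD c d) : δ Q ∈ SD (c + 1) (d + 1) := by
  rw [δ_apply, add_comm c, add_comm d]
  exact ⟨eDotX_mem_SD.1.mul hQ.1, eDotX_mem_SD.2.mul hQ.2⟩

lemma Δ_mem_SD {P : R6} (hP : P ∈ SD (c + 1) (d + 1)) : Δ P ∈ SD c d := by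
  rw [Δ_apply]
  refine Submodule.sum_mem _ fun i _ ↦ ⟨?_, ?_⟩
  · exact (hP.1.pderiv (n' := c + 1) (by rw [wE_xv, add_zero])).pderiv (by rw [wE_ev])
  · exact (hP.2.pderiv (n' := d) (by rw [wX_xv])).pderiv (by rw [wX_ev, add_zero])

lemma Δ_eq_zero_of_mem_SD {P : R6} (hP : P ∈ SD c d) (h : c = 0 ∨ d = 0) : Δ P = 0 := by
  rw [Δ_apply]
  refine Finset.sum_eq_zero fun i _ ↦ ?_
  rcases h with rfl | rfl
  · exact (hP.1.pderiv (n' := 0) (by rw [wE_xv])).pderiv_eq_zero_of_lt (by rw [wE_ev]; omega)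
  · rw [hP.2.pderiv_eq_zero_of_lt (by rw [wX_xv]; omega), map_zero]

lemma Δ_eq_zero_or_mem_SD {P : R6} (hP : P ∈ SD c d) :
    Δ P = 0 ∨ ∃ c' d', c = c' + 1 ∧ d = d' + 1 ∧ Δ P ∈ SD c' d' := by
  rcases c with _ | c'
  · exact .inl (Δ_eq_zero_of_mem_SD hP (.inl rfl))
  rcases d with _ | d'
  · exact .inl (Δ_eq_zero_of_mem_SD hP (.inr rfl))
  exact .inr ⟨c', d', rfl, rfl, Δ_mem_SD hP⟩

lemma δΔ_mem_SD {P : R6} (hP : P ∈ SD c d) : δ (Δ P) ∈ SD c d := by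
  rcases Δ_eq_zero_or_mem_SD hP with h | ⟨c', d', rfl, rfl, h⟩
  · rw [h, map_zero]
    exact zero_mem _
  · exact δ_mem_SD h

lemma Δ_pow_eq_zero {P : R6} (hP : P ∈ SD c d) {k : ℕ} (hk : min c d < k) : (Δ ^ k) P = 0 := by
  induction k generalizing c d P with
  | zero => omega
  | succ k ih =>
    rw [pow_succ, Module.End.mul_apply]
    rcases Δ_eq_zero_or_mem_SD hP with h | ⟨c', d', rfl, rfl, h⟩
    · rw [h, map_zero]
    · exact ih h (by omega)

lemma δ_pow_Δ_pow_succ_apply (j : ℕ) (P : R6) :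
    (δ ^ (j + 1)) ((Δ ^ (j + 1)) P) = δ ((δ ^ j) ((Δ ^ j) (Δ P))) := by
  rw [pow_succ', pow_succ]
  rfl

lemma δ_pow_Δ_pow_mem_SD {P : R6} (hP : P ∈ SD c d) (j : ℕ) : (δ ^ j) ((Δ ^ j) P) ∈ SD c d := by
  induction j generalizing c d P with
  | zero => simpa using hP
  | succ j ih =>
    rw [δ_pow_Δ_pow_succ_apply]
    rcases Δ_eq_zero_or_mem_SD hP with h | ⟨c', d', rfl, rfl, h⟩
    · simp only [h, map_zero]
      exact zero_mem _
    · exact δ_mem_SD (ih h)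

def eigenvalueδΔ (c d j : ℕ) : ℚ := j * (c + d + 2 - j)

lemma eigenvalueδΔ_add_eq (c d j : ℕ) :
    eigenvalueδΔ c d j + (c + d + 3 : ℕ) = eigenvalueδΔ (c + 1) (d + 1) (j + 1) := by
  simp only [eigenvalueδΔ]
  push_cast
  ring

lemma δΔ_δ_pow_Δ_pow_apply {P : R6} (hP : P ∈ SD c d) (j : ℕ) :
    δ (Δ ((δ ^ j) ((Δ ^ j) P))) =
      (δ ^ (j + 1)) ((Δ ^ (j + 1)) P) + eigenvalueδΔ c d j • (δ ^ j) ((Δ ^ j) P) := by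
  induction j generalizing c d P with
  | zero => simp [eigenvalueδΔ]
  | succ j ih =>
    rw [δ_pow_Δ_pow_succ_apply j, δ_pow_Δ_pow_succ_apply (j + 1)]
    rcases Δ_eq_zero_or_mem_SD hP with h | ⟨c', d', rfl, rfl, h⟩
    · simp [h]
    · rw [Δ_δ_apply (δ_pow_Δ_pow_mem_SD h j), map_add, ih h, ← Nat.cast_smul_eq_nsmul ℚ,
        map_add, LinearMap.map_smul_of_tower, LinearMap.map_smul_of_tower, add_assoc, ← add_smul,
        eigenvalueδΔ_add_eq]

lemma aeval_nodal_eigenvalueδΔ_apply {P : R6} (hP : P ∈ SD c d) (j : ℕ) :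
    Polynomial.aeval (δ * Δ) (Lagrange.nodal (Finset.range j) (eigenvalueδΔ c d)) P =
      (δ ^ j) ((Δ ^ j) P) := by
  induction j with
  | zero => simp [Lagrange.nodal]
  | succ j ih =>
    rw [Lagrange.nodal, Finset.prod_range_succ, mul_comm, ← Lagrange.nodal, map_mul,
      Module.End.mul_apply, ih, map_sub, Polynomial.aeval_X, Polynomial.aeval_C,
      LinearMap.sub_apply, Module.End.mul_apply, δΔ_δ_pow_Δ_pow_apply hP,
      Module.algebraMap_end_apply, add_sub_cancel_right]

lemma δΔ_pow_δ_apply {w : R6} (hw : w ∈ SD c d) (n : ℕ) :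
    ((δ * Δ) ^ n) (δ w) = δ (((δ * Δ + algebraMap ℚ _ (c + d + 3 : ℕ)) ^ n) w) := by
  induction n generalizing w with
  | zero => rfl
  | succ n ih =>
    have hδ : (δ * Δ) (δ w) = δ ((δ * Δ + algebraMap ℚ _ (c + d + 3 : ℕ)) w) := by
      rw [Module.End.mul_apply, Δ_δ_apply hw, LinearMap.add_apply, Module.algebraMap_end_apply,
        Nat.cast_smul_eq_nsmul]
      rfl
    have hmem : (δ * Δ + algebraMap ℚ _ (c + d + 3 : ℕ)) w ∈ SD c d := by
      rw [LinearMap.add_apply, Module.algebraMap_end_apply]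
      exact add_mem (δΔ_mem_SD hw) (Submodule.smul_of_tower_mem _ _ hw)
    rw [pow_succ, Module.End.mul_apply, hδ, ih hmem, pow_succ, Module.End.mul_apply]

lemma aeval_δΔ_δ_apply {w : R6} (hw : w ∈ SD c d) (q : ℚ[X]) :
    Polynomial.aeval (δ * Δ) q (δ w) =
      δ (Polynomial.aeval (δ * Δ) (q.comp (.X + .C ((c + d + 3 : ℕ) : ℚ))) w) := by
  rw [Polynomial.aeval_comp, map_add, Polynomial.aeval_X, Polynomial.aeval_C,
    Polynomial.aeval_eq_sum_range, Polynomial.aeval_eq_sum_range]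
  simp only [LinearMap.sum_apply, LinearMap.smul_apply, δΔ_pow_δ_apply hw, map_sum,
    LinearMap.map_smul_of_tower]

end Bigraded

lemma aeval_δΔ_apply_of_Δ_eq_zero {v : R6} (hv : Δ v = 0) (q : ℚ[X]) :
    Polynomial.aeval (δ * Δ) q v = q.coeff 0 • v := by
  obtain ⟨r, hr⟩ := Polynomial.X_dvd_sub_C (p := q)
  have hq : q = r * .X + .C (q.coeff 0) := by rw [mul_comm, ← hr, sub_add_cancel]
  conv_lhs => rw [hq]
  rw [map_add, map_mul, Polynomial.aeval_X, Polynomial.aeval_C, LinearMap.add_apply,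
    Module.End.mul_apply, Module.End.mul_apply, hv, map_zero, map_zero, zero_add,
    Module.algebraMap_end_apply]

def projPoly (c d : ℕ) : ℚ[X] :=
  Lagrange.nodal (Finset.range (min c d)) (fun j ↦ eigenvalueδΔ c d (j + 1))

lemma projPoly_coeff_zero_ne_zero (c d : ℕ) : (projPoly c d).coeff 0 ≠ 0 := by
  rw [Polynomial.coeff_zero_eq_eval_zero, projPoly, Lagrange.eval_nodal]
  refine Finset.prod_ne_zero_iff.mpr fun j hj ↦ ?_
  have hjc : (j : ℚ) + 1 ≤ c := by exact_mod_cast (by simp at hj; omega : j + 1 ≤ c)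
  simp only [eigenvalueδΔ, zero_sub, neg_ne_zero]
  push_cast
  exact (mul_pos (by positivity) (by linarith [(d.cast_nonneg : (0 : ℚ) ≤ d)])).ne'

lemma projPoly_succ_comp (c d : ℕ) :
    (projPoly (c + 1) (d + 1)).comp (.X + .C ((c + d + 3 : ℕ) : ℚ)) =
      Lagrange.nodal (Finset.range (min c d + 1)) (eigenvalueδΔ c d) := by
  rw [projPoly, Lagrange.nodal, Lagrange.nodal, Polynomial.prod_comp, Nat.succ_min_succ]
  refine Finset.prod_congr rfl fun j _ ↦ ?_
  rw [Polynomial.sub_comp, Polynomial.X_comp, Polynomial.C_comp, add_sub_assoc,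
    ← Polynomial.C_sub, ← eigenvalueδΔ_add_eq, sub_add_cancel_right, Polynomial.C_neg,
    ← sub_eq_add_neg]

lemma aeval_projPoly_δ_apply {a b : ℕ} {w : R6} (hw : w ∈ SDsub a b) :
    Polynomial.aeval (δ * Δ) (projPoly a b) (δ w) = 0 := by
  unfold SDsub at hw
  split_ifs at hw with h
  · rw [(Submodule.mem_bot ℂ).1 hw, map_zero, map_zero]
  obtain ⟨c, rfl⟩ : ∃ c, a = c + 1 := ⟨a - 1, by omega⟩
  obtain ⟨d, rfl⟩ : ∃ d, b = d + 1 := ⟨b - 1, by omega⟩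
  simp only [Nat.add_sub_cancel] at hw
  rw [aeval_δΔ_δ_apply hw, projPoly_succ_comp, aeval_nodal_eigenvalueδΔ_apply hw,
    Δ_pow_eq_zero hw (Nat.lt_succ_self _), map_zero, map_zero]

/-- The projection `π_{a,b} : S^aD^b → S^aD^b` with image `V(a,b)` and kernel
`δ(S^{a-1}D^{b-1})` is a polynomial expression `Σⱼ μⱼ δ^j Δ^j` with rational coefficients:
whenever `P ∈ S^aD^b` is decomposed as `P = v + δ(w)` with `v ∈ V(a,b)` and
`w ∈ S^{a-1}D^{b-1}`, the `V(a,b)`-component `v = π_{a,b}(P)` equals `Σⱼ μⱼ δ^j (Δ^j P)`. -/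
theorem stmt6 (a b : ℕ) :
    ∃ (N : ℕ) (μ : ℕ → ℚ), ∀ P ∈ SD a b, ∀ v w : R6,
      v ∈ V a b → w ∈ SDsub a b → P = v + δ w →
      v = ∑ j ∈ Finset.range (N + 1), (μ j : ℂ) • (δ ^ j) ((Δ ^ j) P) := by
  set p := ((projPoly a b).coeff 0)⁻¹ • projPoly a b
  have hp : p.natDegree ≤ min a b := (Polynomial.natDegree_smul_le _ _).trans
    (by rw [projPoly, Lagrange.natDegree_nodal, Finset.card_range])
  obtain ⟨μ, hμ⟩ := Polynomial.exists_eq_sum_smul_nodal_range (eigenvalueδΔ a b) hp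
  refine ⟨min a b, μ, fun P hP v w hv hw hPvw ↦ ?_⟩
  calc v = Polynomial.aeval (δ * Δ) p P := by
        rw [hPvw, map_add, map_smul, LinearMap.smul_apply, LinearMap.smul_apply,
          aeval_projPoly_δ_apply hw, smul_zero, add_zero, aeval_δΔ_apply_of_Δ_eq_zero hv.1,
          smul_smul, inv_mul_cancel₀ (projPoly_coeff_zero_ne_zero a b), one_smul]
    _ = ∑ j ∈ Finset.range (min a b + 1), (μ j : ℂ) • (δ ^ j) ((Δ ^ j) P) := by
        simp [hμ, aeval_nodal_eigenvalueδΔ_apply hP, Rat.cast_smul_eq_qsmul]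
end
end

section
/- For all nonnegative integers m, n and every nonnegative integer i, there exists a nonzero rational number c (depending on m, n, i) such that Δ^i(δ^i(e₁^m · x₃^n)) = c · e₁^m · x₃^n in R. -/
/-!
With `s = e₁x₁ + e₂x₂ + e₃x₃`, the Leibniz rule gives `Δ (s g) = s Δ g + (3 + E) g`, where
`E = Σᵥ Xᵥ ∂ᵥ` is the Euler operator, which is multiplication by `d` on forms of degree `d`.
The form `f = e₁^m x₃^n` of degree `m + n` satisfies `Δ f = 0`, so it is a lowest weight vector
for the resulting `𝔰𝔩₂`-action: `Δ (s^(k+1) f) = (k+1)(m+n+3+k) s^k f`. Iterating,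
`Δ^i (s^i f) = i! (m+n+3)(m+n+4)⋯(m+n+i+2) f`, a positive integer multiple of `f`.
-/

open MvPolynomial

noncomputable section

section LowestWeight

variable {R M : Type*} [Semiring R] [AddCommMonoid M] [Module R M] {A B : Module.End R M}
  {v : M} {a : ℕ}

theorem apply_pow_succ_apply_of_commutator (hv : A v = 0)
    (hAB : ∀ k : ℕ, A (B ((B ^ k) v)) = B (A ((B ^ k) v)) + (a + 2 * k) • (B ^ k) v) (k : ℕ) :
    A ((B ^ (k + 1)) v) = ((k + 1) * (a + k)) • (B ^ k) v := by
  induction k with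
  | zero => simpa [hv] using hAB 0
  | succ k ih =>
    rw [pow_succ', Module.End.mul_apply, hAB, ih, map_nsmul, ← Module.End.mul_apply, ← pow_succ',
      ← add_smul]
    congr 1
    ring

theorem pow_apply_pow_apply_of_commutator (hv : A v = 0)
    (hAB : ∀ k : ℕ, A (B ((B ^ k) v)) = B (A ((B ^ k) v)) + (a + 2 * k) • (B ^ k) v) (i : ℕ) :
    (A ^ i) ((B ^ i) v) = (i.factorial * a.ascFactorial i) • v := by
  induction i with
  | zero => simp
  | succ k ih =>
    rw [pow_succ, Module.End.mul_apply, apply_pow_succ_apply_of_commutator hv hAB, map_nsmul, ih,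
      smul_smul, Nat.factorial_succ, Nat.ascFactorial_succ]
    congr 1
    ring

end LowestWeight

section Pairing

variable {σ ι R : Type*} [CommSemiring R] [Fintype ι] {e x : ι → σ}

theorem isHomogeneous_sum_X_mul_X :
    (∑ i, X (e i) * X (x i) : MvPolynomial σ R).IsHomogeneous 2 :=
  IsHomogeneous.sum _ _ _ fun _ _ => (isHomogeneous_X _ _).mul (isHomogeneous_X _ _)

theorem pderiv_left_sum_X_mul_X (he : e.Injective) (hex : ∀ i j, e i ≠ x j) (i : ι) :
    pderiv (e i) (∑ j, X (e j) * X (x j) : MvPolynomial σ R) = X (x i) := by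
  classical
  simp [pderiv_X, Pi.single_apply, he.eq_iff, (hex _ _).symm]

theorem pderiv_right_sum_X_mul_X (hx : x.Injective) (hex : ∀ i j, e i ≠ x j) (i : ι) :
    pderiv (x i) (∑ j, X (e j) * X (x j) : MvPolynomial σ R) = X (e i) := by
  classical
  simp [pderiv_X, Pi.single_apply, hx.eq_iff, hex]

theorem sum_pderiv_pderiv_sum_X_mul_X_mul (he : e.Injective) (hx : x.Injective)
    (hex : ∀ i j, e i ≠ x j) (g : MvPolynomial σ R) :
    ∑ i, pderiv (e i) (pderiv (x i) ((∑ j, X (e j) * X (x j)) * g)) =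
      (∑ j, X (e j) * X (x j)) * ∑ i, pderiv (e i) (pderiv (x i) g) + Fintype.card ι • g +
        ∑ i, (X (e i) * pderiv (e i) g + X (x i) * pderiv (x i) g) := by
  have h (i : ι) : pderiv (e i) (pderiv (x i) ((∑ j, X (e j) * X (x j)) * g)) =
      (∑ j, X (e j) * X (x j)) * pderiv (e i) (pderiv (x i) g) + g +
        (X (e i) * pderiv (e i) g + X (x i) * pderiv (x i) g) := by
    simp only [pderiv_mul, map_add, pderiv_left_sum_X_mul_X he hex, pderiv_right_sum_X_mul_X hx hex,
      pderiv_X_self]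
    ring
  simp only [h, Finset.sum_add_distrib, Finset.mul_sum, Finset.sum_const, Finset.card_univ]

end Pairing

theorem ev_injective : ev.Injective := by decide

theorem xv_injective : xv.Injective := by decide

theorem ev_ne_xv (i j : Fin 3) : ev i ≠ xv j := by decide +revert

theorem sum_fin_six_eq_sum_ev_add_xv {M : Type*} [AddCommMonoid M] (f : Fin 6 → M) :
    ∑ v, f v = ∑ i, (f (ev i) + f (xv i)) := by
  rw [Fin.sum_univ_add (a := 3) (b := 3), Finset.sum_add_distrib]
  rfl

theorem Δ_δ_apply_of_isHomogeneous {g : R6} {d : ℕ} (hg : g.IsHomogeneous d) :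
    Δ (δ g) = δ (Δ g) + (d + 3) • g := by
  have h := sum_pderiv_pderiv_sum_X_mul_X_mul ev_injective xv_injective ev_ne_xv g
  rw [← sum_fin_six_eq_sum_ev_add_xv (fun v => X v * pderiv v g), hg.sum_X_mul_pderiv] at h
  simp only [Δ, δ, LinearMap.sum_apply, LinearMap.comp_apply, LinearMap.mulLeft_apply,
    Derivation.coeFn_coe]
  rw [h, add_assoc, ← add_smul, Fintype.card_fin, add_comm 3]

theorem isHomogeneous_δ_pow_apply {g : R6} {d : ℕ} (hg : g.IsHomogeneous d) (k : ℕ) :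
    ((δ ^ k) g).IsHomogeneous (d + 2 * k) := by
  induction k with
  | zero => simpa using hg
  | succ k ih =>
    rw [pow_succ', Module.End.mul_apply, mul_add_one, ← add_assoc, add_comm]
    exact isHomogeneous_sum_X_mul_X.mul ih

theorem Δ_X_ev_zero_pow_mul_X_xv_two_pow (m n : ℕ) : Δ (X (ev 0) ^ m * X (xv 2) ^ n) = 0 := by
  simp [Δ, Fin.sum_univ_three, pderiv_X, ev, xv]

/-- For all nonnegative integers `m, n, i` there is a nonzero rational `c` with
`Δ^i (δ^i (e₁^m x₃^n)) = c • e₁^m x₃^n`. -/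
theorem stmt7 (m n i : ℕ) :
    ∃ c : ℚ, c ≠ 0 ∧
      (Δ ^ i) ((δ ^ i) (X (ev 0) ^ m * X (xv 2) ^ n)) =
        (c : ℂ) • (X (ev 0) ^ m * X (xv 2) ^ n) := by
  have hf : (X (ev 0) ^ m * X (xv 2) ^ n : R6).IsHomogeneous (m + n) :=
    (isHomogeneous_X_pow _ m).mul (isHomogeneous_X_pow _ n)
  have hcomm (k : ℕ) := Δ_δ_apply_of_isHomogeneous (isHomogeneous_δ_pow_apply hf k)
  refine ⟨(i.factorial * (m + n + 3).ascFactorial i : ℕ), by positivity, ?_⟩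
  rw [pow_apply_pow_apply_of_commutator (a := m + n + 3) (Δ_X_ev_zero_pow_mul_X_xv_two_pow m n)
    (fun k => by rw [hcomm k, add_right_comm (m + n)]) i, Rat.cast_natCast, Nat.cast_smul_eq_nsmul]
end
end
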